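/- arXiv:2202.11150 — 4 statements merged into one kernel-verified Lean document; each statement's English description precedes it below -/
import Mathlib

section
/- For j ∈ {0,1}, the function p(ν;λ) = λ(λ−1)(|log ν| − 1 − d₀(λ)/2) + λ − 5/6, with d₀(λ) = −ψ(1) − ψ(2) + ψ(λ/2 + 1) + ψ((λ+1)/2), satisfies d₀(1−j) = 1 − 2log2 − 2j; consequently if λ̂₁(ν) solves p(ν; λ̂₁) = 0 with |λ̂₁| ≲ 1/|log ν|, then λ̂₁ = −(5/6)/|log ν| + (−5/9 + (5/6)log 2)/|log ν|² + O(1/|log ν|³) as ν → 0. -/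
open Real

/-!
The values of `d₀` come from `ψ(1) = -γ`, `ψ(1/2) = -γ - 2 log 2` and `ψ(x + 1) = ψ(x) + 1/x`,
all read off Mathlib's complex digamma function.

With `u = 1/|log ν|` and `a = 1 + d₀(λ)/2`, the equation `p(ν; λ) = 0` is the fixed-point
equation `λ = -(5/6) u + λ² (1 - a u) + (a + 1) u λ`. For `λ = O(u)` one iteration gives
`λ = -(5/6) u + O(u²)`, and a second one `λ = -(5/6) u + (25/36 - (5/6)(a + 1)) u² + O(u³)`.
As `d₀` is differentiable at `0`, `a = 1/2 - log 2 + O(λ) = 1/2 - log 2 + O(u)`, which turns the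
coefficient of `u²` into `-5/9 + (5/6) log 2` at the cost of another `O(u³)`.
-/

/-- The digamma function `ψ(x) = Γ'(x)/Γ(x) = (log ∘ Γ)'(x)`. -/
noncomputable def digamma (x : ℝ) : ℝ := deriv (fun t => Real.log (Real.Gamma t)) x

/-- `d₀(λ) = −ψ(1) − ψ(2) + ψ(λ/2 + 1) + ψ((λ+1)/2)`. -/
noncomputable def d₀ (lam : ℝ) : ℝ :=
  -digamma 1 - digamma 2 + digamma (lam / 2 + 1) + digamma ((lam + 1) / 2)

/-- `p(ν;λ) = λ(λ−1)(|log ν| − 1 − d₀(λ)/2) + λ − 5/6`. -/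
noncomputable def pfun (ν lam : ℝ) : ℝ :=
  lam * (lam - 1) * (|Real.log ν| - 1 - d₀ lam / 2) + lam - 5 / 6

lemma ne_neg_natCast_of_re_pos {z : ℂ} (hz : 0 < z.re) (m : ℕ) : z ≠ -m := by
  rintro rfl
  simp at hz
  linarith [(Nat.cast_nonneg m : (0 : ℝ) ≤ m)]

lemma digamma_eq_re_complex_digamma {x : ℝ} (hx : 0 < x) :
    digamma x = (Complex.digamma x).re := by
  have hC := (Complex.differentiableAt_Gamma _
    (ne_neg_natCast_of_re_pos (by simpa using hx))).hasDerivAt.real_of_complex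
  simp only [Complex.Gamma_ofReal, Complex.ofReal_re] at hC
  rw [digamma, (hC.log (Gamma_pos_of_pos hx).ne').deriv, Complex.digamma_def, logDeriv_apply,
    Complex.Gamma_ofReal, Complex.div_ofReal_re]

lemma digamma_add_one {x : ℝ} (hx : 0 < x) : digamma (x + 1) = digamma x + x⁻¹ := by
  rw [digamma_eq_re_complex_digamma hx, digamma_eq_re_complex_digamma (by linarith),
    Complex.ofReal_add, Complex.ofReal_one,
    Complex.digamma_apply_add_one _ (ne_neg_natCast_of_re_pos (by simpa using hx))]
  simp

lemma digamma_one : digamma 1 = -eulerMascheroniConstant := by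
  rw [digamma_eq_re_complex_digamma one_pos, Complex.ofReal_one, Complex.digamma_one]
  simp

lemma digamma_one_half : digamma (1 / 2) = -2 * log 2 - eulerMascheroniConstant := by
  rw [digamma_eq_re_complex_digamma one_half_pos, Complex.ofReal_div, Complex.ofReal_one,
    Complex.ofReal_ofNat, Complex.digamma_one_half]
  simpa using Complex.log_ofReal_re 2

lemma differentiableAt_complex_digamma {z : ℂ} (hz : 0 < z.re) :
    DifferentiableAt ℂ Complex.digamma z := by
  have hU : IsOpen {w : ℂ | 0 < w.re} := isOpen_lt continuous_const Complex.continuous_re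
  have hΓ : DifferentiableOn ℂ Complex.Gamma {w : ℂ | 0 < w.re} := fun w hw =>
    (Complex.differentiableAt_Gamma w (ne_neg_natCast_of_re_pos hw)).differentiableWithinAt
  rw [Complex.digamma_def]
  exact ((hΓ.deriv hU).differentiableAt (hU.mem_nhds hz)).div
    (hΓ.differentiableAt (hU.mem_nhds hz)) (Complex.Gamma_ne_zero_of_re_pos hz)

lemma differentiableAt_digamma {x : ℝ} (hx : 0 < x) : DifferentiableAt ℝ digamma x := by
  refine (differentiableAt_complex_digamma (z := x) (by simpa using hx)).hasDerivAt
    |>.real_of_complex.differentiableAt.congr_of_eventuallyEq ?_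
  filter_upwards [lt_mem_nhds hx] with t ht using digamma_eq_re_complex_digamma ht

lemma d₀_zero : d₀ 0 = -1 - 2 * log 2 := by
  have h := digamma_add_one one_pos
  norm_num [d₀] at h ⊢
  rw [h, digamma_one_half, digamma_one]
  ring

lemma d₀_one : d₀ 1 = 1 - 2 * log 2 := by
  have h₁ := digamma_add_one one_pos
  have h₂ := digamma_add_one one_half_pos
  norm_num [d₀] at h₁ h₂ ⊢
  rw [h₁, h₂, digamma_one_half, digamma_one]
  ring

lemma differentiableAt_d₀_zero : DifferentiableAt ℝ d₀ 0 := by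
  have h₁ : DifferentiableAt ℝ (fun lam : ℝ => digamma (lam / 2 + 1)) 0 :=
    (differentiableAt_digamma (by norm_num)).comp (f := fun lam : ℝ => lam / 2 + 1) 0
      (by fun_prop)
  have h₂ : DifferentiableAt ℝ (fun lam : ℝ => digamma ((lam + 1) / 2)) 0 :=
    (differentiableAt_digamma (by norm_num)).comp (f := fun lam : ℝ => (lam + 1) / 2) 0
      (by fun_prop)
  exact ((differentiableAt_const _).add h₁).add h₂

lemma exists_abs_d₀_sub_le :
    ∃ K δ : ℝ, 0 ≤ K ∧ 0 < δ ∧ ∀ t, |t| < δ → |d₀ t - d₀ 0| ≤ K * |t| := by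
  obtain ⟨K, hK, hbound⟩ := differentiableAt_d₀_zero.isBigO_sub.exists_nonneg
  obtain ⟨δ, hδ, h⟩ := Metric.eventually_nhds_iff.mp hbound.bound
  exact ⟨K, δ, hK, hδ, fun t ht => by simpa using h (by simpa using ht)⟩

lemma eq_fixedPoint_of_pfun_eq_zero {ν lam : ℝ} (hν : log ν ≠ 0) (h : pfun ν lam = 0) :
    lam = -(5 / 6) * |log ν|⁻¹ + lam ^ 2 * (1 - (1 + d₀ lam / 2) * |log ν|⁻¹)
      + ((1 + d₀ lam / 2) + 1) * |log ν|⁻¹ * lam := by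
  rw [pfun] at h
  linear_combination
    (-|log ν|⁻¹) * h + (lam ^ 2 - lam) * mul_inv_cancel₀ (abs_ne_zero.mpr hν)

lemma abs_sub_second_order_le {u a α lam c A : ℝ} (hu0 : 0 < u) (hu1 : u ≤ 1) (ha : |a| ≤ A)
    (hlam : |lam| ≤ c * u) (h : lam = α * u + lam ^ 2 * (1 - a * u) + (a + 1) * u * lam) :
    |lam - (α * u + (α ^ 2 + (a + 1) * α) * u ^ 2)|
      ≤ ((A + 1) * (c ^ 2 + c) * (c + |α| + A + 1) + A * c ^ 2) * u ^ 3 := by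
  have hA : 0 ≤ A := (abs_nonneg a).trans ha
  have hc : 0 ≤ c := nonneg_of_mul_nonneg_left ((abs_nonneg lam).trans hlam) hu0
  have ha1 : |a + 1| ≤ A + 1 := (abs_add_le a 1).trans (by rw [abs_one]; linarith)
  have hau : |1 - a * u| ≤ A + 1 := by
    calc |1 - a * u| ≤ 1 + |a| * u := by
          simpa [abs_mul, abs_of_nonneg hu0.le] using abs_sub (1 : ℝ) (a * u)
      _ ≤ 1 + A * 1 := by gcongr
      _ = A + 1 := by ring
  set e := lam - α * u with he_def
  have he : |e| ≤ (A + 1) * (c ^ 2 + c) * u ^ 2 := by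
    calc |e| = |lam ^ 2 * (1 - a * u) + (a + 1) * u * lam| := by rw [he_def]; congr 1; linarith
      _ ≤ |lam| ^ 2 * |1 - a * u| + |a + 1| * u * |lam| := by
        refine (abs_add_le _ _).trans ?_
        rw [abs_mul, abs_mul, abs_mul, abs_pow, abs_of_nonneg hu0.le]
      _ ≤ (c * u) ^ 2 * (A + 1) + (A + 1) * u * (c * u) := by gcongr
      _ = (A + 1) * (c ^ 2 + c) * u ^ 2 := by ring
  calc |lam - (α * u + (α ^ 2 + (a + 1) * α) * u ^ 2)|
      = |e * (lam + α * u + (a + 1) * u) - a * u * lam ^ 2| := by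
        rw [he_def]; congr 1; linear_combination h
    _ ≤ |e| * (|lam| + |α| * u + |a + 1| * u) + |a| * u * |lam| ^ 2 := by
        refine (abs_sub _ _).trans (add_le_add ?_ ?_)
        · rw [abs_mul]
          gcongr
          refine (abs_add_le _ _).trans (add_le_add ((abs_add_le _ _).trans ?_) ?_)
            <;> simp only [abs_mul, abs_of_nonneg hu0.le, le_refl]
        · rw [abs_mul, abs_mul, abs_pow, abs_of_nonneg hu0.le]
    _ ≤ (A + 1) * (c ^ 2 + c) * u ^ 2 * (c * u + |α| * u + (A + 1) * u)
          + A * u * (c * u) ^ 2 := by gcongr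
    _ = ((A + 1) * (c ^ 2 + c) * (c + |α| + A + 1) + A * c ^ 2) * u ^ 3 := by ring

lemma exists_abs_sub_expansion_le {K c : ℝ} (hK : 0 ≤ K) (hc : 0 ≤ c) :
    ∃ C : ℝ, 0 < C ∧ ∀ u lam d : ℝ, 0 < u → u ≤ 1 → |lam| ≤ c * u →
      |d - (-1 - 2 * log 2)| ≤ K * |lam| →
      lam = -(5 / 6) * u + lam ^ 2 * (1 - (1 + d / 2) * u) + ((1 + d / 2) + 1) * u * lam →
      |lam - (-(5 / 6) * u + (-(5 / 9) + (5 / 6) * log 2) * u ^ 2)| ≤ C * u ^ 3 := by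
  set A := |1 / 2 - log 2| + K * c / 2
  refine ⟨((A + 1) * (c ^ 2 + c) * (c + |-(5 / 6)| + A + 1) + A * c ^ 2) + 5 / 12 * K * c + 1,
    by positivity, fun u lam d hu0 hu1 hlam hd h => ?_⟩
  have hd' : |d - (-1 - 2 * log 2)| ≤ K * c * u := by
    calc _ ≤ K * |lam| := hd
      _ ≤ K * (c * u) := by gcongr
      _ = K * c * u := by ring
  have hd1 : |d - (-1 - 2 * log 2)| ≤ K * c :=
    hd'.trans (mul_le_of_le_one_right (by positivity) hu1)
  have ha : |1 + d / 2| ≤ A := by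
    calc |1 + d / 2| = |(1 / 2 - log 2) + (d - (-1 - 2 * log 2)) / 2| := by ring_nf
      _ ≤ |1 / 2 - log 2| + |d - (-1 - 2 * log 2)| / 2 := by
        simpa [abs_div] using abs_add_le (1 / 2 - log 2) ((d - (-1 - 2 * log 2)) / 2)
      _ ≤ |1 / 2 - log 2| + K * c / 2 := by gcongr
  have hcoef : |(-(5 / 6) * u + ((-(5 / 6)) ^ 2 + ((1 + d / 2) + 1) * (-(5 / 6))) * u ^ 2)
      - (-(5 / 6) * u + (-(5 / 9) + (5 / 6) * log 2) * u ^ 2)| ≤ 5 / 12 * K * c * u ^ 3 := by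
    calc _ = |-(5 / 12 * (d - (-1 - 2 * log 2))) * u ^ 2| := by congr 1; ring
      _ = 5 / 12 * |d - (-1 - 2 * log 2)| * u ^ 2 := by
        rw [abs_mul, abs_neg, abs_mul, abs_of_pos (by norm_num : (0 : ℝ) < 5 / 12),
          abs_of_nonneg (sq_nonneg u)]
      _ ≤ 5 / 12 * (K * c * u) * u ^ 2 := by gcongr
      _ = 5 / 12 * K * c * u ^ 3 := by ring
  calc _ ≤ _ :=
        abs_sub_le _ (-(5 / 6) * u + ((-(5 / 6)) ^ 2 + ((1 + d / 2) + 1) * (-(5 / 6))) * u ^ 2) _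
    _ ≤ ((A + 1) * (c ^ 2 + c) * (c + |-(5 / 6)| + A + 1) + A * c ^ 2) * u ^ 3
        + 5 / 12 * K * c * u ^ 3 := add_le_add (abs_sub_second_order_le hu0 hu1 ha hlam h) hcoef
    _ ≤ _ := by nlinarith [pow_pos hu0 3]

/-- For `j ∈ {0,1}`, `d₀(1−j) = 1 − 2log2 − 2j`; consequently, if `λ̂₁(ν)` solves
`p(ν;λ̂₁) = 0` with `|λ̂₁| ≲ 1/|log ν|`, then
`λ̂₁ = −(5/6)/|log ν| + (−5/9 + (5/6)log 2)/|log ν|² + O(1/|log ν|³)` as `ν → 0`. -/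
theorem d0_values_and_lambda1_expansion :
    (∀ j : ℕ, j = 0 ∨ j = 1 →
      d₀ (1 - (j : ℝ)) = 1 - 2 * Real.log 2 - 2 * (j : ℝ)) ∧
    (∀ C₁ : ℝ, 0 < C₁ → ∃ C : ℝ, 0 < C ∧ ∃ ν₀ : ℝ, 0 < ν₀ ∧ ν₀ < 1 ∧
      ∀ ν : ℝ, 0 < ν → ν < ν₀ → ∀ lam : ℝ,
        pfun ν lam = 0 → |lam| ≤ C₁ / |Real.log ν| →
        |lam - (-(5 / 6) / |Real.log ν|
            + (-(5 / 9) + (5 / 6) * Real.log 2) / |Real.log ν| ^ 2)|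
          ≤ C / |Real.log ν| ^ 3) := by
  refine ⟨fun j hj => ?_, fun C₁ hC₁ => ?_⟩
  · rcases hj with rfl | rfl
    · norm_num [d₀_one]
    · norm_num [d₀_zero]
      ring
  obtain ⟨K, δ, hK, hδ, hlip⟩ := exists_abs_d₀_sub_le
  obtain ⟨C, hC, hexp⟩ := exists_abs_sub_expansion_le hK hC₁.le
  have hCδ : 0 < C₁ / δ := div_pos hC₁ hδ
  refine ⟨C, hC, exp (-(1 + C₁ / δ)), exp_pos _, exp_lt_one_iff.mpr (by linarith),
    fun ν hν hνν₀ lam hp hlam => ?_⟩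
  have hL : 1 + C₁ / δ < |log ν| := by
    have := log_lt_log hν hνν₀
    rw [log_exp] at this
    rw [abs_of_neg (by linarith)]
    linarith
  have hLpos : 0 < |log ν| := by linarith
  have hlamδ : |lam| < δ := by
    refine hlam.trans_lt ((div_lt_iff₀ hLpos).mpr ?_)
    linarith [(div_lt_iff₀ hδ).mp (by linarith : C₁ / δ < |log ν|)]
  have key := hexp |log ν|⁻¹ lam (d₀ lam) (inv_pos.mpr hLpos)
    (inv_le_one_of_one_le₀ (by linarith)) (by rwa [← div_eq_mul_inv])
    (d₀_zero ▸ hlip lam hlamδ)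
    (eq_fixedPoint_of_pfun_eq_zero (abs_pos.mp hLpos) hp)
  convert key using 2 <;> ring
end

section
/- Hardy-type inequality with boundary term: for k > 0, 0 < r₁ < r₂ < ∞, and g ∈ C¹([r₁,r₂]), ∫_{r₁}^{r₂} |g(y)/y|² y dy ≤ C_k ( ∫_{r₁}^{r₂} |g'(y) + k g(y)/y|² y dy + |g(r₁)|² ) for a constant C_k depending only on k. -/
open Real

/-!
Expanding the square, `(g' + k g / y)² y = g'² y + k (g²)' + k² g² / y`. The first term is
nonnegative and the second integrates to `k (g(r₂)² - g(r₁)²) ≥ -k g(r₁)²`, so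
`k² ∫ g² / y ≤ ∫ (g' + k g / y)² y + k g(r₁)²`, which gives the inequality with
`C_k = 1 / k² + 1 / k`.
-/

open Set intervalIntegral
open MeasureTheory (volume)

theorem mul_two_mul_add_sq_mul_le_sq_add_div_mul {y : ℝ} (hy : 0 < y) (k a b : ℝ) :
    k * (2 * b * a) + k ^ 2 * (|b / y| ^ 2 * y) ≤ |a + k * b / y| ^ 2 * y := by
  have expand :
      |a + k * b / y| ^ 2 * y = a ^ 2 * y + k * (2 * b * a) + k ^ 2 * (|b / y| ^ 2 * y) := by
    rw [sq_abs, sq_abs]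
    field_simp
    ring
  rw [expand]
  nlinarith [mul_nonneg (sq_nonneg a) hy.le]

theorem ContDiffOn.hasDerivAt_derivWithin_Icc {g : ℝ → ℝ} {a b y : ℝ}
    (hg : ContDiffOn ℝ 1 g (Icc a b)) (hy : y ∈ Ioo a b) :
    HasDerivAt g (derivWithin g (Icc a b) y) y :=
  ((hg.differentiableOn one_ne_zero y (Ioo_subset_Icc_self hy)).hasDerivWithinAt).hasDerivAt
    (Icc_mem_nhds hy.1 hy.2)

theorem sq_mul_integral_abs_div_sq_mul_le {g φ : ℝ → ℝ} {a b k : ℝ}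
    (ha : 0 < a) (hab : a ≤ b) (hk : 0 ≤ k) (hg : ContinuousOn g (Icc a b)) (hφ : ContinuousOn φ (Icc a b))
    (hderiv : ∀ y ∈ Ioo a b, HasDerivAt g (φ y) y) :
    k ^ 2 * ∫ y in a..b, |g y / y| ^ 2 * y
      ≤ (∫ y in a..b, |φ y + k * g y / y| ^ 2 * y) + k * g a ^ 2 := by
  have hpos : ∀ y ∈ Icc a b, 0 < y := fun y hy => ha.trans_le hy.1
  have hne : ∀ y ∈ Icc a b, y ≠ 0 := fun y hy => (hpos y hy).ne'
  have hint_cross : IntervalIntegrable (fun y => 2 * g y * φ y) volume a b :=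
    ((continuousOn_const.mul hg).mul hφ).intervalIntegrable_of_Icc hab
  have hint_sq : IntervalIntegrable (fun y => |g y / y| ^ 2 * y) volume a b :=
    (((hg.div continuousOn_id hne).abs.pow 2).mul continuousOn_id).intervalIntegrable_of_Icc hab
  have hint_rhs : IntervalIntegrable (fun y => |φ y + k * g y / y| ^ 2 * y) volume a b :=
    ((((hφ.add ((continuousOn_const.mul hg).div continuousOn_id hne)).abs).pow 2).mul
      continuousOn_id).intervalIntegrable_of_Icc hab
  have ftc : ∫ y in a..b, 2 * g y * φ y = g b ^ 2 - g a ^ 2 :=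
    integral_eq_sub_of_hasDerivAt_of_le hab (hg.pow 2)
      (fun y hy => by simpa using (hderiv y hy).pow 2) hint_cross
  have mono : ∫ y in a..b, k * (2 * g y * φ y) + k ^ 2 * (|g y / y| ^ 2 * y)
      ≤ ∫ y in a..b, |φ y + k * g y / y| ^ 2 * y :=
    integral_mono_on hab ((hint_cross.const_mul k).add (hint_sq.const_mul _)) hint_rhs
      (fun y hy => mul_two_mul_add_sq_mul_le_sq_add_div_mul (hpos y hy) k (φ y) (g y))
  rw [integral_add (hint_cross.const_mul k) (hint_sq.const_mul _), integral_const_mul,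
    integral_const_mul, ftc] at mono
  nlinarith [mul_nonneg hk (sq_nonneg (g b))]

/-- Hardy-type inequality with boundary term: for `k > 0` there is `C_k > 0`
(depending only on `k`) such that for all `0 < r₁ < r₂ < ∞` and `g ∈ C¹([r₁,r₂])`,
`∫_{r₁}^{r₂} |g(y)/y|² y dy ≤ C_k (∫_{r₁}^{r₂} |g'(y) + k g(y)/y|² y dy + |g(r₁)|²)`. -/
theorem hardy_inequality_with_boundary (k : ℝ) (hk : 0 < k) :
    ∃ C : ℝ, 0 < C ∧ ∀ r₁ r₂ : ℝ, 0 < r₁ → r₁ < r₂ →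
      ∀ g : ℝ → ℝ, ContDiffOn ℝ 1 g (Set.Icc r₁ r₂) →
        (∫ y in r₁..r₂, |g y / y| ^ 2 * y)
          ≤ C * ((∫ y in r₁..r₂, |deriv g y + k * g y / y| ^ 2 * y) + |g r₁| ^ 2) := by
  refine ⟨1 / k ^ 2 + 1 / k, by positivity, fun r₁ r₂ hr₁ hlt g hg => ?_⟩
  have hderiv : ∀ y ∈ Ioo r₁ r₂, HasDerivAt g (derivWithin g (Icc r₁ r₂) y) y :=
    fun y hy => hg.hasDerivAt_derivWithin_Icc hy
  have deriv_eq : (∫ y in r₁..r₂, |deriv g y + k * g y / y| ^ 2 * y)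
      = ∫ y in r₁..r₂, |derivWithin g (Icc r₁ r₂) y + k * g y / y| ^ 2 * y :=
    integral_congr_Ioo_of_le hlt.le fun y hy => by simp only [(hderiv y hy).deriv]
  have key := sq_mul_integral_abs_div_sq_mul_le hr₁ hlt.le hk.le hg.continuousOn
    (hg.continuousOn_derivWithin (uniqueDiffOn_Icc hlt) le_rfl) hderiv
  rw [← deriv_eq, ← sq_abs (g r₁)] at key
  set D := ∫ y in r₁..r₂, |g y / y| ^ 2 * y
  set I := ∫ y in r₁..r₂, |deriv g y + k * g y / y| ^ 2 * y
  have hI : 0 ≤ I :=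
    integral_nonneg hlt.le fun y hy => mul_nonneg (sq_nonneg _) (hr₁.le.trans hy.1)
  have hG : 0 ≤ |g r₁| ^ 2 := sq_nonneg _
  calc D ≤ (I + k * |g r₁| ^ 2) / k ^ 2 := by rw [le_div_iff₀ (by positivity)]; linarith
    _ = 1 / k ^ 2 * I + 1 / k * |g r₁| ^ 2 := by field_simp
    _ ≤ (1 / k ^ 2 + 1 / k) * (I + |g r₁| ^ 2) := by
      nlinarith [mul_nonneg (one_div_nonneg.2 hk.le) hI,
        mul_nonneg (one_div_nonneg.2 (sq_nonneg k)) hG]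
end

section
/- The linearized operator factorizes self-dually: H = A*A where A = ∂_y − (1−y²)/((1+y²) y) and A* = −∂_y − 1/y − (1−y²)/((1+y²)y), i.e. for every smooth f on (0,∞), A*(Af)(y) = −f''(y) − f'(y)/y + cos(2·2arctan y) f(y)/y². Moreover the conjugate H̃ = A A* equals −∂_{yy} − (1/y)∂_y + Ṽ/y² with Ṽ(y) = 4/(1+y²), which has nonnegative potential Ṽ ≥ 0 with ∂_y(Ṽ(y)) ≤ 0 for y ≥ 0 (repulsivity). -/
open Real

/-- `A = ∂_y − (1−y²)/((1+y²)y)`. -/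
noncomputable def Aop (f : ℝ → ℝ) (y : ℝ) : ℝ :=
  deriv f y - (1 - y ^ 2) / ((1 + y ^ 2) * y) * f y

/-- `A* = −∂_y − 1/y − (1−y²)/((1+y²)y)`, the formal adjoint of `A` w.r.t. `y dy`. -/
noncomputable def Astar (g : ℝ → ℝ) (y : ℝ) : ℝ :=
  -deriv g y - g y / y - (1 - y ^ 2) / ((1 + y ^ 2) * y) * g y

lemma hasDerivAt_G (y : ℝ) (hy : y ≠ 0) :
    HasDerivAt (fun x : ℝ => (1 - x ^ 2) / ((1 + x ^ 2) * x))
      (((-(2*y)) * ((1 + y ^ 2) * y) - (1 - y ^ 2) * (2*y*y + (1 + y ^ 2) * 1)) /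
        ((1 + y ^ 2) * y) ^ 2) y := by
  have hN : HasDerivAt (fun x : ℝ => 1 - x ^ 2) (-(2*y)) y := by
    simpa using (hasDerivAt_pow 2 y).const_sub 1
  have hD : HasDerivAt (fun x : ℝ => (1 + x ^ 2) * x) (2*y*y + (1 + y ^ 2) * 1) y := by
    have h1 : HasDerivAt (fun x : ℝ => 1 + x ^ 2) (2*y) y := by
      simpa using (hasDerivAt_pow 2 y).const_add 1
    simpa [Pi.mul_def] using h1.mul (hasDerivAt_id' y)
  have hDy : (1 + y ^ 2) * y ≠ 0 := mul_ne_zero (by positivity) hy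
  exact hN.div hD hDy

lemma cos_four_arctan (y : ℝ) :
    Real.cos (2 * (2 * Real.arctan y)) = 2 * (2 * (1 / (1 + y ^ 2)) - 1) ^ 2 - 1 := by
  rw [Real.cos_two_mul, Real.cos_two_mul, Real.cos_sq_arctan]

/-- Self-dual factorization `H = A*A`, conjugate `H̃ = AA* = −∂_{yy} − (1/y)∂_y + Ṽ/y²`
with `Ṽ(y) = 4/(1+y²)`, and repulsivity `Ṽ ≥ 0`, `∂_y Ṽ ≤ 0` for `y ≥ 0`. -/
theorem self_dual_factorization (f : ℝ → ℝ) (hf : ContDiff ℝ (⊤ : ℕ∞) f) :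
    (∀ y : ℝ, 0 < y →
      Astar (fun x => Aop f x) y
        = -(deriv (deriv f) y) - deriv f y / y
          + Real.cos (2 * (2 * Real.arctan y)) * f y / y ^ 2) ∧
    (∀ y : ℝ, 0 < y →
      Aop (fun x => Astar f x) y
        = -(deriv (deriv f) y) - deriv f y / y
          + (4 / (1 + y ^ 2)) * f y / y ^ 2) ∧
    (∀ y : ℝ, 0 ≤ 4 / (1 + y ^ 2)) ∧
    (∀ y : ℝ, 0 ≤ y → deriv (fun x : ℝ => 4 / (1 + x ^ 2)) y ≤ 0) := by
  have hfd : Differentiable ℝ f := hf.differentiable (by simp)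
  have hfd'd : Differentiable ℝ (deriv f) := by
    have hf' : ContDiff ℝ ((⊤:ℕ∞):WithTop ℕ∞) f := hf.of_le (by simp)
    have h := (contDiff_infty_iff_deriv.mp hf').2
    exact h.differentiable (by simp)
  refine ⟨?_, ?_, ?_, ?_⟩
  · intro y hy
    have hy0 : y ≠ 0 := ne_of_gt hy
    have hG := hasDerivAt_G y hy0
    have hA : HasDerivAt (fun x => Aop f x)
        (deriv (deriv f) y - ((((-(2*y)) * ((1 + y ^ 2) * y) -
          (1 - y ^ 2) * (2*y*y + (1 + y ^ 2) * 1)) / ((1 + y ^ 2) * y) ^ 2) * f y +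
          (1 - y ^ 2) / ((1 + y ^ 2) * y) * deriv f y)) y := by
      exact ((hfd'd y).hasDerivAt).sub (hG.mul (hfd y).hasDerivAt)
    have hderiv : deriv (fun x => Aop f x) y = _ := hA.deriv
    rw [Astar, hderiv, cos_four_arctan, Aop]
    have h1 : (1 : ℝ) + y ^ 2 ≠ 0 := by positivity
    field_simp
    ring
  · intro y hy
    have hy0 : y ≠ 0 := ne_of_gt hy
    have hG := hasDerivAt_G y hy0
    have hA : HasDerivAt (fun x => Astar f x)
        (-(deriv (deriv f) y) -
          (deriv f y * y⁻¹ + f y * (-(y ^ 2)⁻¹)) -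
          ((((-(2*y)) * ((1 + y ^ 2) * y) -
            (1 - y ^ 2) * (2*y*y + (1 + y ^ 2) * 1)) / ((1 + y ^ 2) * y) ^ 2) * f y +
            (1 - y ^ 2) / ((1 + y ^ 2) * y) * deriv f y)) y := by
      have h1 : HasDerivAt (fun x => -deriv f x) (-(deriv (deriv f) y)) y :=
        ((hfd'd y).hasDerivAt).neg
      have h2 : HasDerivAt (fun x => f x / x)
          (deriv f y * y⁻¹ + f y * (-(y ^ 2)⁻¹)) y := by
        simpa [div_eq_mul_inv, Pi.mul_def] using ((hfd y).hasDerivAt).mul (hasDerivAt_inv hy0)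
      exact (h1.sub h2).sub (hG.mul (hfd y).hasDerivAt)
    have hderiv : deriv (fun x => Astar f x) y = _ := hA.deriv
    rw [Aop, hderiv, Astar]
    have h1 : (1 : ℝ) + y ^ 2 ≠ 0 := by positivity
    field_simp
    ring
  · intro y; positivity
  · intro y hy
    have hD : HasDerivAt (fun x : ℝ => 4 / (1 + x ^ 2))
        ((0 * (1 + y ^ 2) - 4 * (2*y)) / (1 + y ^ 2) ^ 2) y := by
      have h1 : HasDerivAt (fun x : ℝ => 1 + x ^ 2) (2*y) y := by
        simpa using (hasDerivAt_pow 2 y).const_add 1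
      exact (hasDerivAt_const y (4:ℝ)).div h1 (by positivity)
    rw [hD.deriv]
    have : (0 * (1 + y ^ 2) - 4 * (2*y)) = -(8*y) := by ring
    rw [this]
    apply div_nonpos_of_nonpos_of_nonneg
    · nlinarith
    · positivity
end

section
/- Let β : [τ₀, ∞) → ℝ be C¹ with β(τ) → 0 as τ → ∞ and satisfying β'(τ) = β(τ) + O(τ^{-1}) (i.e. |β'(τ) − β(τ)| ≤ C/τ for all τ ≥ τ₀). Then |β(τ)| ≤ C'/τ for all τ ≥ τ₀, for some constant C' depending only on C and τ₀. -/
open Real Filter Set Topology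

/-! The function `β` solves `β' = β + f` with `|f τ| ≤ C / τ`, and multiplying by the
integrating factor `e^{-s}` turns the unstable equation into a monotonicity statement:
for `s ≥ τ` the functions `e^{-s} (±β s - C / τ)` are nondecreasing, while the weight forces
them to tend to `0` at infinity. Hence both are `≤ 0` at `s = τ`, i.e. `|β τ| ≤ C / τ`. -/

theorem MonotoneOn.le_of_tendsto_atTop {α β : Type*} [TopologicalSpace α] [Preorder α]
    [OrderClosedTopology α] [Preorder β] [IsDirectedOrder β] {f : β → α} {a : β} {L : α}
    (hf : MonotoneOn f (Ici a)) (hL : Tendsto f atTop (𝓝 L)) : f a ≤ L :=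
  haveI : Nonempty β := ⟨a⟩
  ge_of_tendsto hL <| (eventually_ge_atTop a).mono fun _ hs => hf self_mem_Ici hs hs

theorem le_of_sub_deriv_le_of_tendsto {β β' : ℝ → ℝ} {a M L : ℝ}
    (hβ : ∀ s, a ≤ s → HasDerivAt β (β' s) s) (hM : ∀ s, a ≤ s → β s - β' s ≤ M)
    (hL : Tendsto β atTop (𝓝 L)) : β a ≤ M := by
  set h : ℝ → ℝ := fun s => exp (-s) * (β s - M)
  have hderiv : ∀ s, a ≤ s → HasDerivAt h (exp (-s) * (β' s - β s + M)) s := fun s hs => by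
    refine (((hasDerivAt_neg s).exp).mul ((hβ s hs).sub_const M)).congr_deriv ?_
    ring
  have hmono : MonotoneOn h (Ici a) := by
    refine monotoneOn_of_hasDerivWithinAt_nonneg (convex_Ici a)
      (fun s hs => (hderiv s hs).continuousAt.continuousWithinAt)
      (fun s hs => (hderiv s (interior_subset hs)).hasDerivWithinAt) fun s hs => ?_
    have hMs := hM s (interior_subset hs)
    exact mul_nonneg (exp_pos _).le (by linarith)
  have hlim : Tendsto h atTop (𝓝 0) := by
    simpa using tendsto_exp_neg_atTop_nhds_zero.mul (hL.sub_const M)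
  exact sub_nonpos.1 <| nonpos_of_mul_nonpos_right (hmono.le_of_tendsto_atTop hlim) (exp_pos _)

/-- Backward integration of an exponentially unstable ODE: if `β` is `C¹` on
`[τ₀,∞)` with `β(τ) → 0` as `τ → ∞` and `|β'(τ) − β(τ)| ≤ C/τ`, then
`|β(τ)| ≤ C'/τ` for all `τ ≥ τ₀`, with `C'` depending only on `C` and `τ₀`. -/
theorem backward_ode_integration (τ₀ C : ℝ) (hτ₀ : 0 < τ₀) (hC : 0 < C) :
    ∃ C' : ℝ, 0 < C' ∧ ∀ β β' : ℝ → ℝ,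
      (∀ τ : ℝ, τ₀ ≤ τ → HasDerivAt β (β' τ) τ) →
      ContinuousOn β' (Set.Ici τ₀) →
      Tendsto β atTop (nhds 0) →
      (∀ τ : ℝ, τ₀ ≤ τ → |β' τ - β τ| ≤ C / τ) →
      ∀ τ : ℝ, τ₀ ≤ τ → |β τ| ≤ C' / τ := by
  refine ⟨C, hC, fun β β' hβ _ hlim hbound τ hτ => ?_⟩
  have hdefect : ∀ s, τ ≤ s → |β' s - β s| ≤ C / τ := fun s hs =>
    (hbound s (hτ.trans hs)).trans (div_le_div_of_nonneg_left hC.le (hτ₀.trans_le hτ) hs)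
  rw [abs_le']
  constructor
  · refine le_of_sub_deriv_le_of_tendsto (fun s hs => hβ s (hτ.trans hs)) (fun s hs => ?_) hlim
    exact (abs_sub_comm (β s) (β' s) ▸ le_abs_self _).trans (hdefect s hs)
  · refine le_of_sub_deriv_le_of_tendsto (β := -β) (β' := -β')
      (fun s hs => (hβ s (hτ.trans hs)).neg) (fun s hs => ?_) hlim.neg
    rw [Pi.neg_apply, Pi.neg_apply, neg_sub_neg]
    exact (le_abs_self _).trans (hdefect s hs)
end
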